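/- For any two M×N complex matrices F and F̃ with all columns of unit norm, |FP(F̃) − FP(F)| ≤ 4N^{3/2}·‖F̃ − F‖_HS, where FP(F) := ‖F*F‖_HS² = Tr[(FF*)²]. -/
import Mathlib


noncomputable section

def hsq {M N : ℕ} (A : Matrix (Fin M) (Fin N) ℂ) : ℝ := ∑ i, ∑ j, ‖A i j‖ ^ 2

/-- Frame potential: squared Frobenius norm of the Gram matrix. -/
def FP {M N : ℕ} (F : Matrix (Fin M) (Fin N) ℂ) : ℝ :=
  ∑ n : Fin N, ∑ n' : Fin N, ‖(F.conjTranspose * F) n n'‖ ^ 2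

attribute [local instance] Matrix.frobeniusSeminormedAddCommGroup

lemma frob_norm_sq {m n : ℕ} (A : Matrix (Fin m) (Fin n) ℂ) :
    ‖A‖ ^ 2 = ∑ i, ∑ j, ‖A i j‖ ^ 2 := by
  rw [Matrix.frobenius_norm_def]
  rw [← Real.rpow_natCast _ 2, ← Real.rpow_mul (by positivity)]
  norm_num

set_option maxHeartbeats 1000000 in
theorem frame_potential_lipschitz
    (M N : ℕ) (F Ft : Matrix (Fin M) (Fin N) ℂ)
    (hunit : ∀ n : Fin N, ∑ m : Fin M, ‖F m n‖ ^ 2 = 1)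
    (hunit' : ∀ n : Fin N, ∑ m : Fin M, ‖Ft m n‖ ^ 2 = 1) :
    |FP Ft - FP F| ≤ 4 * (N : ℝ) ^ ((3 : ℝ) / 2) * Real.sqrt (hsq (Ft - F)) := by
  have hF2 : ‖F‖ ^ 2 = (N : ℝ) := by
    rw [frob_norm_sq, Finset.sum_comm, Finset.sum_congr rfl fun j _ => hunit j]
    simp
  have hFt2 : ‖Ft‖ ^ 2 = (N : ℝ) := by
    rw [frob_norm_sq, Finset.sum_comm, Finset.sum_congr rfl fun j _ => hunit' j]
    simp
  have hFn : ‖F‖ = Real.sqrt N := by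
    rw [← hF2, Real.sqrt_sq (norm_nonneg _)]
  have hFtn : ‖Ft‖ = Real.sqrt N := by
    rw [← hFt2, Real.sqrt_sq (norm_nonneg _)]
  set Δ : Matrix (Fin M) (Fin N) ℂ := Ft - F with hΔ
  have hsqΔ : Real.sqrt (hsq Δ) = ‖Δ‖ := by
    rw [hsq, ← frob_norm_sq, Real.sqrt_sq (norm_nonneg _)]
  set G := F.conjTranspose * F with hG
  set Gt := Ft.conjTranspose * Ft with hGt
  have hFPF : FP F = ‖G‖ ^ 2 := (frob_norm_sq G).symm
  have hFPFt : FP Ft = ‖Gt‖ ^ 2 := (frob_norm_sq Gt).symm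
  have hdecomp : Gt - G = Ft.conjTranspose * Δ + Δ.conjTranspose * F := by
    simp only [hG, hGt, hΔ, Matrix.mul_sub, Matrix.sub_mul, Matrix.conjTranspose_sub]
    abel
  have hGdiff : ‖Gt - G‖ ≤ 2 * Real.sqrt N * ‖Δ‖ := by
    rw [hdecomp]
    calc ‖Ft.conjTranspose * Δ + Δ.conjTranspose * F‖
        ≤ ‖Ft.conjTranspose * Δ‖ + ‖Δ.conjTranspose * F‖ := norm_add_le _ _
      _ ≤ ‖Ft.conjTranspose‖ * ‖Δ‖ + ‖Δ.conjTranspose‖ * ‖F‖ :=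
          add_le_add (Matrix.frobenius_norm_mul _ _) (Matrix.frobenius_norm_mul _ _)
      _ = 2 * Real.sqrt N * ‖Δ‖ := by
          rw [Matrix.frobenius_norm_conjTranspose, Matrix.frobenius_norm_conjTranspose,
            hFn, hFtn]
          ring
  have hGle : ‖G‖ ≤ (N : ℝ) := by
    calc ‖G‖ ≤ ‖F.conjTranspose‖ * ‖F‖ := Matrix.frobenius_norm_mul _ _
      _ = (N : ℝ) := by
          rw [Matrix.frobenius_norm_conjTranspose, ← sq, hF2]
  have hGtle : ‖Gt‖ ≤ (N : ℝ) := by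
    calc ‖Gt‖ ≤ ‖Ft.conjTranspose‖ * ‖Ft‖ := Matrix.frobenius_norm_mul _ _
      _ = (N : ℝ) := by
          rw [Matrix.frobenius_norm_conjTranspose, ← sq, hFt2]
  have key : |FP Ft - FP F| ≤ (2 * Real.sqrt N * ‖Δ‖) * (2 * N) := by
    rw [hFPF, hFPFt]
    have h1 : ‖Gt‖ ^ 2 - ‖G‖ ^ 2 = (‖Gt‖ - ‖G‖) * (‖Gt‖ + ‖G‖) := by ring
    rw [h1, abs_mul]
    have h2 : |‖Gt‖ - ‖G‖| ≤ ‖Gt - G‖ := abs_norm_sub_norm_le _ _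
    have h3 : |‖Gt‖ + ‖G‖| ≤ 2 * N := by
      rw [abs_of_nonneg (by positivity)]
      linarith
    have h4 : |‖Gt‖ - ‖G‖| ≤ 2 * Real.sqrt N * ‖Δ‖ := h2.trans hGdiff
    have := mul_le_mul h4 h3 (abs_nonneg _) (by positivity)
    linarith
  rw [hsqΔ]
  have hrpow : (N : ℝ) ^ ((3 : ℝ) / 2) = (N : ℝ) * Real.sqrt N := by
    rcases Nat.eq_zero_or_pos N with h | h
    · subst h; simp
    · have hN0 : (0 : ℝ) < N := by exact_mod_cast h
      rw [show (3 : ℝ) / 2 = 1 + 1 / 2 by norm_num, Real.rpow_add hN0, Real.rpow_one,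
        ← Real.sqrt_eq_rpow]
  rw [hrpow]
  calc |FP Ft - FP F| ≤ (2 * Real.sqrt N * ‖Δ‖) * (2 * N) := key
    _ = 4 * ((N : ℝ) * Real.sqrt N) * ‖Δ‖ := by ring
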